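/- arXiv:1306.2690 — 3 statements merged into one kernel-verified Lean document; each statement's English description precedes it below -/
import Mathlib

section
/- Let X = (V,E) be a finite k-regular simple graph on n vertices with adjacency-matrix eigenvalues λ1 ≥ λ2 ≥ … ≥ λn, and let V = Ω1 ∪ Ω2 be a partition of the vertex set into two disjoint parts. Then the number e(Ω1,Ω2) of edges with one endpoint in Ω1 and the other in Ω2 satisfies e(Ω1,Ω2) ≥ (k − λ2)·|Ω1|·|Ω2| / |V|. -/
/-!
With `L = k I - A` the Laplacian, the constant vector is a `k`-eigenvector of `A`. If `λ₂ < k` it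
spans the top eigenspace, so every `f` with `∑ f = 0` lies in the span of the remaining
eigenvectors and `fᵀ A f ≤ λ₂ ‖f‖²`, i.e. `fᵀ L f ≥ (k - λ₂) ‖f‖²`; if `λ₂ ≥ k` there is nothing
to prove. For `f = |Ω₂| 𝟙_{Ω₁} - |Ω₁| 𝟙_{Ω₂}` one has `∑ f = 0`, `‖f‖² = |Ω₁| |Ω₂| n` and
`fᵀ L f = ∑_{xy ∈ E} (f x - f y)² = n² e(Ω₁, Ω₂)`.
-/

/-- The number of edges of the graph `X` with one endpoint in `Ω₁` and the
other endpoint in `Ω₂` (for disjoint `Ω₁`, `Ω₂` each crossing edge is counted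
exactly once as an ordered pair). -/
def crossingEdges {V : Type*} [Fintype V] [DecidableEq V] (X : SimpleGraph V)
    [DecidableRel X.Adj] (Ω₁ Ω₂ : Finset V) : ℕ :=
  ((Ω₁ ×ˢ Ω₂).filter (fun p => X.Adj p.1 p.2)).card

open Matrix Finset
open scoped RealInnerProductSpace

namespace LinearMap.IsSymmetric

variable {ι E : Type*} [Fintype ι] [NormedAddCommGroup E] [InnerProductSpace ℝ E]
  {T : E →ₗ[ℝ] E} {b : OrthonormalBasis ι ℝ E} {ev : ι → ℝ}

lemma inner_basis_apply (hT : T.IsSymmetric) (hb : ∀ i, T (b i) = ev i • b i) (i : ι) (f : E) :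
    ⟪b i, T f⟫ = ev i * ⟪b i, f⟫ := by
  rw [← hT, hb, real_inner_smul_left]

lemma inner_self_apply_eq_sum (hT : T.IsSymmetric) (hb : ∀ i, T (b i) = ev i • b i) (f : E) :
    ⟪f, T f⟫ = ∑ i, ev i * ⟪b i, f⟫ ^ 2 := by
  rw [← b.sum_inner_mul_inner]
  refine sum_congr rfl fun i _ => ?_
  rw [hT.inner_basis_apply hb, real_inner_comm]
  ring

lemma inner_basis_eq_zero_of_eigenvalue_ne (hT : T.IsSymmetric) (hb : ∀ i, T (b i) = ev i • b i)
    {u : E} {k : ℝ} (hu : T u = k • u) {i : ι} (hi : ev i ≠ k) : ⟪b i, u⟫ = 0 := by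
  have h := hT.inner_basis_apply hb i u
  rw [hu, real_inner_smul_right] at h
  exact (mul_eq_zero.mp (by linarith : (ev i - k) * ⟪b i, u⟫ = 0)).resolve_left
    (sub_ne_zero.mpr hi)

lemma inner_basis_eq_zero_of_inner_eigenvector_eq_zero (hT : T.IsSymmetric)
    (hb : ∀ i, T (b i) = ev i • b i) {u : E} {k : ℝ} (hu : T u = k • u) (hu₀ : u ≠ 0) {i₀ : ι}
    (hne : ∀ i ≠ i₀, ev i ≠ k) {f : E} (hf : ⟪u, f⟫ = 0) : ⟪b i₀, f⟫ = 0 := by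
  have hu_coord : ∀ i ≠ i₀, ⟪b i, u⟫ = 0 := fun i hi =>
    hT.inner_basis_eq_zero_of_eigenvalue_ne hb hu (hne i hi)
  have hu_i₀ : ⟪b i₀, u⟫ ≠ 0 := by
    intro h
    apply hu₀
    rw [← b.sum_repr' u]
    refine sum_eq_zero fun i _ => ?_
    obtain rfl | hi := eq_or_ne i i₀
    · rw [h, zero_smul]
    · rw [hu_coord i hi, zero_smul]
  rw [← b.sum_inner_mul_inner, sum_eq_single i₀
    (fun i _ hi => by rw [real_inner_comm, hu_coord i hi, zero_mul]) (by simp),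
    real_inner_comm] at hf
  exact (mul_eq_zero.mp hf).resolve_left hu_i₀

theorem inner_self_apply_le_of_inner_eigenvector_eq_zero (hT : T.IsSymmetric)
    (hb : ∀ i, T (b i) = ev i • b i) {u : E} {k μ : ℝ} (hu : T u = k • u) (hu₀ : u ≠ 0) {i₀ : ι}
    (hle : ∀ i ≠ i₀, ev i ≤ μ) (hμk : μ < k) {f : E} (hf : ⟪u, f⟫ = 0) :
    ⟪f, T f⟫ ≤ μ * ‖f‖ ^ 2 := by
  have hf₀ := hT.inner_basis_eq_zero_of_inner_eigenvector_eq_zero hb hu hu₀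
    (fun i hi => ((hle i hi).trans_lt hμk).ne) hf
  rw [hT.inner_self_apply_eq_sum hb, ← b.sum_sq_inner_right, mul_sum]
  refine sum_le_sum fun i _ => ?_
  obtain rfl | hi := eq_or_ne i i₀
  · simp [hf₀]
  · exact mul_le_mul_of_nonneg_right (hle i hi) (sq_nonneg _)

end LinearMap.IsSymmetric

theorem Matrix.IsHermitian.dotProduct_mulVec_le_of_dotProduct_eigenvector_eq_zero
    {n : Type*} [Fintype n] [DecidableEq n] {A : Matrix n n ℝ} (hA : A.IsHermitian)
    {u : n → ℝ} {k μ : ℝ} (hu : A *ᵥ u = k • u) (hu₀ : u ≠ 0) {i₀ : n}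
    (hle : ∀ i ≠ i₀, hA.eigenvalues i ≤ μ) (hμk : μ < k) {f : n → ℝ} (hf : u ⬝ᵥ f = 0) :
    f ⬝ᵥ (A *ᵥ f) ≤ μ * (f ⬝ᵥ f) := by
  have key := (isSymmetric_toEuclideanLin_iff.mpr hA).inner_self_apply_le_of_inner_eigenvector_eq_zero
    (b := hA.eigenvectorBasis) (fun i => congrArg (WithLp.toLp 2) (hA.mulVec_eigenvectorBasis i))
    (u := WithLp.toLp 2 u) (congrArg (WithLp.toLp 2) hu) (by simpa using hu₀) hle hμk
    (f := WithLp.toLp 2 f) (by rwa [EuclideanSpace.inner_toLp_toLp, dotProduct_comm])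
  rwa [← real_inner_self_eq_norm_sq, EuclideanSpace.inner_toLp_toLp, dotProduct_comm] at key

lemma Finset.sum_ite_mem_univ {α M : Type*} [Fintype α] [DecidableEq α] [AddCommMonoid M]
    (s : Finset α) (p q : M) : ∑ x, (if x ∈ s then p else q) = #s • p + #sᶜ • q := by
  rw [← sum_add_sum_compl s, sum_congr rfl fun x hx => if_pos hx,
    sum_congr rfl fun x hx => if_neg (mem_compl.mp hx), sum_const, sum_const]

lemma Equiv.apply_le_apply_symm_one {α β : Type*} [Preorder β] {n : ℕ} (e : α ≃ Fin n)
    (hn : 1 < n) {g : α → β} (hg : Antitone (g ∘ e.symm)) {i : α}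
    (hi : i ≠ e.symm ⟨0, by omega⟩) : g i ≤ g (e.symm ⟨1, hn⟩) := by
  have hi' : (e i : ℕ) ≠ 0 := fun h => hi (e.eq_symm_apply.mpr (Fin.ext h))
  simpa using hg (show (⟨1, hn⟩ : Fin n) ≤ e i from Nat.one_le_iff_ne_zero.mpr hi')

section CrossingEdges

variable {V : Type*} [Fintype V] [DecidableEq V] (X : SimpleGraph V) [DecidableRel X.Adj]

lemma crossingEdges_eq_sum (s t : Finset V) :
    (crossingEdges X s t : ℝ) = ∑ x, ∑ y, if X.Adj x y ∧ x ∈ s ∧ y ∈ t then 1 else 0 := by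
  have hfilter : (s ×ˢ t).filter (fun p => X.Adj p.1 p.2) =
      univ.filter (fun p => X.Adj p.1 p.2 ∧ p.1 ∈ s ∧ p.2 ∈ t) := by
    ext
    simp [and_comm]
  rw [crossingEdges, hfilter, card_filter, ← Fintype.sum_prod_type']
  push_cast
  rfl

lemma SimpleGraph.dotProduct_lapMatrix_mulVec_ite (s : Finset V) (p q : ℝ) :
    (fun x => if x ∈ s then p else q) ⬝ᵥ (X.lapMatrix ℝ *ᵥ fun x => if x ∈ s then p else q) =
      (p - q) ^ 2 * crossingEdges X s sᶜ := by
  rw [← toLinearMap₂'_apply', X.lapMatrix_toLinearMap₂' ℝ, crossingEdges_eq_sum]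
  have hterm : ∀ x y,
      (if X.Adj x y then ((if x ∈ s then p else q) - if y ∈ s then p else q) ^ 2 else 0) =
        (p - q) ^ 2 * ((if X.Adj x y ∧ x ∈ s ∧ y ∈ sᶜ then 1 else 0) +
          if X.Adj y x ∧ y ∈ s ∧ x ∈ sᶜ then 1 else 0) := by
    intro x y
    by_cases hxy : X.Adj x y <;> by_cases hx : x ∈ s <;> by_cases hy : y ∈ s <;>
      simp [hxy, hx, hy, X.adj_comm y x]
    all_goals ring
  simp only [hterm, ← mul_sum, sum_add_distrib]
  -- the two orientations of a crossing edge contribute equally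
  rw [sum_comm (f := fun x y => if X.Adj y x ∧ y ∈ s ∧ x ∈ sᶜ then (1 : ℝ) else 0)]
  ring

def balancedIndicator (s : Finset V) : V → ℝ := fun x => if x ∈ s then (#sᶜ : ℝ) else -#s

variable (s : Finset V)

lemma sum_balancedIndicator : ∑ x, balancedIndicator s x = 0 := by
  simp only [balancedIndicator, sum_ite_mem_univ, nsmul_eq_mul]
  ring

lemma balancedIndicator_dotProduct_self :
    balancedIndicator s ⬝ᵥ balancedIndicator s = #s * #sᶜ * Fintype.card V := by
  have hsq : ∀ x, balancedIndicator s x * balancedIndicator s x =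
      if x ∈ s then (#sᶜ * #sᶜ : ℝ) else #s * #s := fun x => by
    by_cases hx : x ∈ s <;> simp [balancedIndicator, hx]
  simp only [dotProduct, hsq, sum_ite_mem_univ, nsmul_eq_mul, ← card_add_card_compl s]
  push_cast
  ring

lemma dotProduct_lapMatrix_mulVec_balancedIndicator :
    balancedIndicator s ⬝ᵥ (X.lapMatrix ℝ *ᵥ balancedIndicator s) =
      (Fintype.card V : ℝ) ^ 2 * crossingEdges X s sᶜ := by
  unfold balancedIndicator
  rw [X.dotProduct_lapMatrix_mulVec_ite, ← card_add_card_compl s]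
  push_cast
  ring

end CrossingEdges

namespace SimpleGraph.IsRegularOfDegree

variable {V : Type*} [Fintype V] [DecidableEq V] {X : SimpleGraph V} [DecidableRel X.Adj] {k : ℕ}

lemma dotProduct_lapMatrix_mulVec (hreg : X.IsRegularOfDegree k) (f : V → ℝ) :
    f ⬝ᵥ (X.lapMatrix ℝ *ᵥ f) = k * (f ⬝ᵥ f) - f ⬝ᵥ (X.adjMatrix ℝ *ᵥ f) := by
  simp only [lapMatrix, sub_mulVec, dotProduct_sub, dotProduct_mulVec_degMatrix, hreg _]
  simp only [dotProduct, mul_sum, mul_assoc]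

theorem sub_mul_dotProduct_le_dotProduct_lapMatrix_mulVec [Nonempty V]
    (hreg : X.IsRegularOfDegree k) (hA : (X.adjMatrix ℝ).IsHermitian) {i₀ : V} {μ : ℝ}
    (hle : ∀ i ≠ i₀, hA.eigenvalues i ≤ μ) (hμk : μ < k) {f : V → ℝ} (hf : ∑ x, f x = 0) :
    (k - μ) * (f ⬝ᵥ f) ≤ f ⬝ᵥ (X.lapMatrix ℝ *ᵥ f) := by
  have hone : X.adjMatrix ℝ *ᵥ (fun _ => 1) = (k : ℝ) • fun _ => 1 := by
    ext v
    simpa using adjMatrix_mulVec_const_apply_of_regular (a := (1 : ℝ)) hreg (v := v)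
  have hray := hA.dotProduct_mulVec_le_of_dotProduct_eigenvector_eq_zero hone
    (Function.const_ne_zero.mpr one_ne_zero) hle hμk (f := f) (by simpa [dotProduct] using hf)
  rw [hreg.dotProduct_lapMatrix_mulVec]
  linarith

theorem sub_mul_card_mul_card_compl_le [Nonempty V] (hreg : X.IsRegularOfDegree k)
    (hA : (X.adjMatrix ℝ).IsHermitian) {i₀ : V} {μ : ℝ} (hle : ∀ i ≠ i₀, hA.eigenvalues i ≤ μ)
    (hμk : μ < k) (s : Finset V) :
    (k - μ) * #s * #sᶜ ≤ Fintype.card V * crossingEdges X s sᶜ := by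
  have hgap := hreg.sub_mul_dotProduct_le_dotProduct_lapMatrix_mulVec hA hle hμk
    (sum_balancedIndicator s)
  rw [balancedIndicator_dotProduct_self, dotProduct_lapMatrix_mulVec_balancedIndicator] at hgap
  have hpos : (0 : ℝ) < Fintype.card V := by exact_mod_cast Fintype.card_pos
  nlinarith

end SimpleGraph.IsRegularOfDegree

/-- **Expander Crossing Lemma.**  Let `X` be a finite `k`-regular simple graph
whose adjacency-matrix eigenvalues, listed with multiplicity in decreasing order
via the enumeration `e`, are `λ₁ ≥ λ₂ ≥ …`.  For every partition
`V = Ω₁ ∪ Ω₂` into disjoint parts, the number of crossing edges satisfies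
`e(Ω₁,Ω₂) ≥ (k − λ₂)·|Ω₁|·|Ω₂|/|V|`. -/
theorem expander_crossing_lemma {V : Type*} [Fintype V] [DecidableEq V]
    (X : SimpleGraph V) [DecidableRel X.Adj] (k : ℕ)
    (hreg : X.IsRegularOfDegree k)
    (hA : (X.adjMatrix ℝ).IsHermitian)
    (e : V ≃ Fin (Fintype.card V)) (hn : 1 < Fintype.card V)
    (hdecr : ∀ i j : Fin (Fintype.card V), i ≤ j →
      hA.eigenvalues (e.symm j) ≤ hA.eigenvalues (e.symm i))
    (Ω₁ Ω₂ : Finset V) (hdisj : Disjoint Ω₁ Ω₂) (hcover : Ω₁ ∪ Ω₂ = Finset.univ) :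
    ((k : ℝ) - hA.eigenvalues (e.symm ⟨1, hn⟩)) * Ω₁.card * Ω₂.card / (Fintype.card V) ≤
      crossingEdges X Ω₁ Ω₂ := by
  obtain rfl : Ω₂ = Ω₁ᶜ := eq_compl_iff_isCompl.mpr
    ⟨hdisj.symm, codisjoint_iff.mpr (by rwa [sup_comm])⟩
  have : Nonempty V := Fintype.card_pos_iff.mp (by omega)
  have hpos : (0 : ℝ) < Fintype.card V := by exact_mod_cast Fintype.card_pos
  rcases le_or_gt (k : ℝ) (hA.eigenvalues (e.symm ⟨1, hn⟩)) with hkμ | hμk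
  · refine (div_nonpos_of_nonpos_of_nonneg ?_ hpos.le).trans (by positivity)
    exact mul_nonpos_of_nonpos_of_nonneg
      (mul_nonpos_of_nonpos_of_nonneg (by linarith) (by positivity)) (by positivity)
  rw [div_le_iff₀ hpos, mul_comm _ (Fintype.card V : ℝ)]
  exact hreg.sub_mul_card_mul_card_compl_le hA
    (fun _ => e.apply_le_apply_symm_one hn (g := hA.eigenvalues) hdecr) hμk Ω₁
end

section
/- Let G be a finite abelian group of order n (written additively) and let C be a (n,k,μ)-difference set in G (for every g ≠ 0, the number of pairs (c1,c2) ∈ C×C with g = c1 − c2 equals μ) with 2 ≤ k < n, μ ≥ 1, such that C = −C and 0 ∉ C. Then the Cayley graph Cay(G,C) is a Ramanujan graph. -/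
open scoped Classical

/-- The Cayley graph of an additive group `G` with connection set `D`:
vertices are the elements of `G`, and `u`, `v` are adjacent iff `u - v ∈ D`
(for `0 ∉ D` and `D = -D` this is a simple graph). -/
def cayley {G : Type*} [AddGroup G] (D : Finset G) : SimpleGraph G :=
  SimpleGraph.fromRel (fun u v => u - v ∈ D)

/-- `μ` is an eigenvalue of the (real) adjacency matrix of the finite graph `X`. -/
noncomputable def HasAdjEigenvalue {V : Type*} [Fintype V] (X : SimpleGraph V) (μ : ℝ) : Prop :=
  ∃ f : V → ℝ, f ≠ 0 ∧ (X.adjMatrix ℝ).mulVec f = μ • f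

/-- A finite graph `X` is a `k`-regular Ramanujan graph: it is connected,
`k`-regular, and every adjacency eigenvalue `λ` with `|λ| ≠ k` satisfies
`|λ| ≤ 2√(k-1)`. -/
noncomputable def IsRamanujan {V : Type*} [Fintype V] (X : SimpleGraph V) (k : ℕ) : Prop :=
  X.Connected ∧ X.IsRegularOfDegree k ∧
    ∀ μ : ℝ, HasAdjEigenvalue X μ → |μ| ≠ (k : ℝ) →
      |μ| ≤ 2 * Real.sqrt ((k : ℝ) - 1)

/-!
Writing `A` for the adjacency matrix of `Cay(G, C)`, the entry `(A²)ᵤᵥ` counts the representations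
`u - v = c₁ - c₂` with `cᵢ ∈ C`, so the difference-set condition says `A² = (k - μ) I + μ J`.
Since `1ᵀ A = k 1ᵀ`, an eigenvector of `A` for an eigenvalue `θ ≠ k` is killed by `J`, hence
`θ² = k - μ ≤ k - 1`. Connectivity holds because `μ ≥ 1` puts every vertex within distance two
of every other.
-/

open Finset Matrix

namespace Matrix

variable {n K : Type*} [Fintype n] [DecidableEq n] [Field K]

theorem eigenvalue_sq_eq_of_mul_self_eq {A : Matrix n n K} {k μ θ : K} {f : n → K}
    (hcol : 1 ᵥ* A = k • 1) (hsq : A * A = (k - μ) • 1 + μ • of fun _ _ => 1)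
    (hf0 : f ≠ 0) (hf : A *ᵥ f = θ • f) (hθ : θ ≠ k) : θ ^ 2 = k - μ := by
  have hsum : 1 ⬝ᵥ f = 0 := by
    have h : k * (1 ⬝ᵥ f) = θ * (1 ⬝ᵥ f) := by
      rw [← smul_eq_mul, ← smul_dotProduct, ← hcol, ← dotProduct_mulVec, hf, dotProduct_smul,
        smul_eq_mul]
    exact (mul_eq_mul_right_iff.mp h).resolve_left hθ.symm
  have hJ : (of fun _ _ => 1 : Matrix n n K) *ᵥ f = 0 := by
    ext i
    simpa [mulVec, dotProduct] using hsum
  refine smul_left_injective K hf0 ?_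
  calc θ ^ 2 • f = (A * A) *ᵥ f := by rw [← mulVec_mulVec, hf, mulVec_smul, hf, smul_smul, sq]
    _ = (k - μ) • f := by
      rw [hsq, add_mulVec, smul_mulVec, smul_mulVec, one_mulVec, hJ, smul_zero, add_zero]

end Matrix

theorem SimpleGraph.IsRegularOfDegree.one_vecMul_adjMatrix {V R : Type*} [Fintype V]
    {Γ : SimpleGraph V} [DecidableRel Γ.Adj] [NonAssocSemiring R] {d : ℕ}
    (h : Γ.IsRegularOfDegree d) : (1 : V → R) ᵥ* Γ.adjMatrix R = (d : R) • 1 := by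
  ext v
  simp [h v]

section AddGroup

variable {G : Type*} [AddGroup G] {D : Finset G}

theorem cayley_adj_iff (hsym : ∀ c ∈ D, -c ∈ D) (h0 : (0 : G) ∉ D) {u v : G} :
    (cayley D).Adj u v ↔ u - v ∈ D := by
  refine ⟨fun ⟨_, h⟩ => h.elim id fun h => by simpa using hsym _ h, fun h => ⟨?_, .inl h⟩⟩
  rintro rfl
  exact h0 (by simpa using h)

theorem cayley_isRegularOfDegree [Fintype G] (hsym : ∀ c ∈ D, -c ∈ D) (h0 : (0 : G) ∉ D) :
    (cayley D).IsRegularOfDegree #D := by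
  intro v
  have hN : (cayley D).neighborFinset v = D.image (· + v) := by
    ext u
    simp only [SimpleGraph.mem_neighborFinset, SimpleGraph.adj_comm _ v, cayley_adj_iff hsym h0,
      mem_image]
    exact ⟨fun h => ⟨u - v, h, sub_add_cancel u v⟩, by rintro ⟨c, hc, rfl⟩; simpa using hc⟩
  rw [SimpleGraph.degree, hN, card_image_of_injective _ (add_left_injective v)]

end AddGroup

section AddCommGroup

variable {G : Type*} [AddCommGroup G] {D : Finset G}

theorem cayley_connected_of_forall_eq_sub (hsym : ∀ c ∈ D, -c ∈ D) (h0 : (0 : G) ∉ D)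
    (hD : ∀ g ≠ 0, ∃ c₁ ∈ D, ∃ c₂ ∈ D, c₁ - c₂ = g) : (cayley D).Connected := by
  refine SimpleGraph.Connected.mk fun u v => ?_
  obtain rfl | huv := eq_or_ne u v
  · rfl
  obtain ⟨c₁, hc₁, c₂, hc₂, hg⟩ := hD (u - v) (sub_ne_zero.2 huv)
  have h₁ : (cayley D).Adj u (v + c₁) := by
    rw [cayley_adj_iff hsym h0, show u - (v + c₁) = -c₂ by rw [← sub_sub, ← hg]; abel]
    exact hsym _ hc₂
  have h₂ : (cayley D).Adj (v + c₁) v := by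
    rwa [cayley_adj_iff hsym h0, add_sub_cancel_left]
  exact h₁.reachable.trans h₂.reachable

theorem cayley_adjMatrix_mul_self_apply [Fintype G] {R : Type*} [NonAssocSemiring R]
    (hsym : ∀ c ∈ D, -c ∈ D) (h0 : (0 : G) ∉ D) (u v : G) :
    ((cayley D).adjMatrix R * (cayley D).adjMatrix R) u v =
      #{p ∈ D ×ˢ D | p.1 - p.2 = u - v} := by
  have hcommon : {w ∈ (cayley D).neighborFinset u | (cayley D).Adj w v} =
      ({w | u - w ∈ D ∧ v - w ∈ D} : Finset G) := by
    ext w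
    rw [mem_filter, SimpleGraph.mem_neighborFinset, SimpleGraph.adj_comm _ w v,
      cayley_adj_iff hsym h0, cayley_adj_iff hsym h0, mem_filter]
    simp only [mem_univ, true_and]
  have hsnd {c₁ c₂ : G} (h : c₁ - c₂ = u - v) : v - (u - c₁) = c₂ :=
    calc v - (u - c₁) = c₁ - (u - v) := by abel
      _ = c₂ := by rw [← h, sub_sub_cancel]
  simp only [SimpleGraph.adjMatrix_mul_apply, SimpleGraph.adjMatrix_apply, sum_boole]
  rw [hcommon]
  congr 1
  refine card_nbij' (fun w => (u - w, v - w)) (fun p => u - p.1) ?_ ?_ ?_ ?_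
  · intro w hw
    simp_all
  · rintro ⟨c₁, c₂⟩ hp
    simp only [coe_filter, mem_product, mem_univ, true_and, Set.mem_ofPred_eq] at hp ⊢
    rw [sub_sub_cancel, hsnd hp.2]
    exact hp.1
  · intro w _
    simp
  · rintro ⟨c₁, c₂⟩ hp
    simp only [coe_filter, mem_product] at hp
    simp only [sub_sub_cancel, hsnd hp.2]

theorem cayley_adjMatrix_mul_self_eq_of_difference_set [Fintype G] {R : Type*} [Ring R]
    {k μ : ℕ} (hk : #D = k) (hsym : ∀ c ∈ D, -c ∈ D) (h0 : (0 : G) ∉ D)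
    (hDS : ∀ g : G, g ≠ 0 → #{p ∈ D ×ˢ D | p.1 - p.2 = g} = μ) :
    (cayley D).adjMatrix R * (cayley D).adjMatrix R =
      ((k : R) - μ) • 1 + (μ : R) • Matrix.of fun _ _ => 1 := by
  ext u v
  rw [cayley_adjMatrix_mul_self_apply hsym h0]
  obtain rfl | huv := eq_or_ne u v
  · have hdiag : #{p ∈ D ×ˢ D | p.1 - p.2 = 0} = k := by
      rw [← hk, ← diag_card D, diag_eq_filter]
      simp_rw [sub_eq_zero]
    simp [hdiag]
  · simp [hDS _ (sub_ne_zero.2 huv), Matrix.one_apply_ne huv]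

end AddCommGroup

theorem reversible_difference_set_ramanujan_general {G : Type*} [AddCommGroup G] [Fintype G]
    (C : Finset G) (k μ : ℕ) (hkC : C.card = k) (hμ : 1 ≤ μ)
    (hDS : ∀ g : G, g ≠ 0 →
      ((C ×ˢ C).filter (fun p => p.1 - p.2 = g)).card = μ)
    (hsym : ∀ c ∈ C, -c ∈ C) (h0C : (0 : G) ∉ C) :
    IsRamanujan (cayley C) k := by
  have hreg : (cayley C).IsRegularOfDegree k := hkC ▸ cayley_isRegularOfDegree hsym h0C
  refine ⟨cayley_connected_of_forall_eq_sub hsym h0C fun g hg => ?_, hreg, ?_⟩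
  · obtain ⟨⟨c₁, c₂⟩, hp⟩ := card_pos.1 (hDS g hg ▸ hμ)
    simp only [mem_filter, mem_product] at hp
    exact ⟨c₁, hp.1.1, c₂, hp.1.2, hp.2⟩
  · rintro θ ⟨f, hf0, hf⟩ hθ
    have hθk : θ ≠ k := by
      rintro rfl
      exact hθ (abs_of_nonneg k.cast_nonneg)
    have hθsq := Matrix.eigenvalue_sq_eq_of_mul_self_eq hreg.one_vecMul_adjMatrix
      (cayley_adjMatrix_mul_self_eq_of_difference_set hkC hsym h0C hDS) hf0 hf hθk
    have hθle : θ ^ 2 ≤ (k : ℝ) - 1 := by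
      rw [hθsq]
      gcongr
      exact_mod_cast hμ
    exact (Real.abs_le_sqrt hθle).trans (le_mul_of_one_le_left (Real.sqrt_nonneg _) one_le_two)

/-- If `C` is an `(n,k,μ)`-difference set in a finite abelian group `G` of
order `n` with `2 ≤ k < n` and `μ ≥ 1`, such that `C = -C` and `0 ∉ C`
(i.e. `C` is reversible), then the Cayley graph `Cay(G,C)` is a Ramanujan
graph. -/
theorem reversible_difference_set_ramanujan {G : Type*} [AddCommGroup G] [Fintype G]
    (C : Finset G) (k μ : ℕ) (hkC : C.card = k)
    (hk2 : 2 ≤ k) (hkn : k < Fintype.card G) (hμ : 1 ≤ μ)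
    (hDS : ∀ g : G, g ≠ 0 →
      ((C ×ˢ C).filter (fun p => p.1 - p.2 = g)).card = μ)
    (hsym : ∀ c ∈ C, -c ∈ C) (h0C : (0 : G) ∉ C) :
    IsRamanujan (cayley C) k :=
  reversible_difference_set_ramanujan_general C k μ hkC hμ hDS hsym h0C
end

section
/- Let q = 2^m with m ≥ 1 and let D = {z ∈ F_q : z ≠ 0, Tr_m(z) = Tr_m(z^{−1}) = 1}. Then 4·|D| = k_m(1) + 2^m + 1, where k_m(1) = ∑_{x ∈ F_q^*} (−1)^{Tr_m(x + x^{−1})}. -/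
/-!
Write `ψ x = (-1)^(Tr x)`, a nontrivial additive character of `F_{2^m}` with values in `ℤ`.
The indicator of `Tr a = Tr b = 1` is `(1 - ψ a)(1 - ψ b) / 4 = (1 - ψ a - ψ b + ψ (a + b)) / 4`.
Summing over `x ≠ 0` with `a = x`, `b = x⁻¹`, the last term gives `k_m(1)`, and each linear term
gives `-1`, since the sum of `ψ` over all of `F_{2^m}` vanishes and inversion permutes `F_{2^m}^*`.
-/

open scoped Classical

noncomputable instance (m : ℕ) : Fintype (GaloisField 2 m) := Fintype.ofFinite _

/-- The binary Kloosterman sum `k_m(a) = ∑_{x ∈ F_{2^m}^*} (−1)^{Tr_m(ax + x⁻¹)}`,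
where `Tr_m` is the absolute trace of `F_{2^m} = GaloisField 2 m` over `F_2` and
`(−1)^c` for `c ∈ F_2` means `1` if `c = 0` and `−1` if `c = 1`. -/
noncomputable def kloos (m : ℕ) (a : GaloisField 2 m) : ℤ :=
  ∑ x ∈ Finset.univ.filter (fun x : GaloisField 2 m => x ≠ 0),
    (-1 : ℤ) ^ ((Algebra.trace (ZMod 2) (GaloisField 2 m)) (a * x + x⁻¹)).val

/-- The set `D = {z ∈ F_{2^m} : z ≠ 0, Tr_m(z) = Tr_m(z⁻¹) = 1}`. -/
noncomputable def Dset (m : ℕ) : Finset (GaloisField 2 m) :=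
  Finset.univ.filter (fun z : GaloisField 2 m => z ≠ 0 ∧
    Algebra.trace (ZMod 2) (GaloisField 2 m) z = 1 ∧
    Algebra.trace (ZMod 2) (GaloisField 2 m) z⁻¹ = 1)

open Finset

def signAddChar : AddChar (ZMod 2) ℤ where
  toFun c := (-1) ^ c.val
  map_zero_eq_one' := rfl
  map_add_eq_mul' := by decide

lemma four_mul_ite_and_eq_signAddChar (a b : ZMod 2) :
    (4 * if a = 1 ∧ b = 1 then 1 else 0 : ℤ) =
      1 - signAddChar a - signAddChar b + signAddChar (a + b) := by
  revert a b; decide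

lemma sum_filter_ne_zero_inv {G M : Type*} [GroupWithZero G] [Fintype G] [AddCommMonoid M]
    (f : G → M) : ∑ x ∈ univ.filter (· ≠ 0), f x⁻¹ = ∑ x ∈ univ.filter (· ≠ 0), f x :=
  sum_equiv (Equiv.inv G) (by simp) (fun _ _ => rfl)

section TraceSign

variable (F : Type*) [Field F] [Algebra (ZMod 2) F]

noncomputable def traceSign : AddChar F ℤ :=
  signAddChar.compAddMonoidHom (Algebra.trace (ZMod 2) F).toAddMonoidHom

lemma traceSign_apply (x : F) : traceSign F x = signAddChar (Algebra.trace (ZMod 2) F x) := rfl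

variable [Fintype F]

lemma traceSign_ne_one : traceSign F ≠ 1 := by
  obtain ⟨x, hx⟩ := Algebra.trace_surjective (ZMod 2) F 1
  refine AddChar.ne_one_iff.2 ⟨x, ?_⟩
  rw [traceSign_apply, hx]
  decide

lemma sum_filter_ne_zero_traceSign : ∑ x ∈ univ.filter (· ≠ 0), traceSign F x = -1 := by
  rw [filter_ne', sum_erase_eq_sub (mem_univ _),
    AddChar.sum_eq_zero_of_ne_one (traceSign_ne_one F), AddChar.map_zero_eq_one, zero_sub]

theorem four_mul_card_trace_eq_one_trace_inv_eq_one :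
    4 * (#(univ.filter fun z : F => z ≠ 0 ∧ Algebra.trace (ZMod 2) F z = 1 ∧
        Algebra.trace (ZMod 2) F z⁻¹ = 1) : ℤ) =
      ∑ x ∈ univ.filter (· ≠ 0), traceSign F (x + x⁻¹) + Fintype.card F + 1 := by
  have hS : (#(univ.filter fun x : F => x ≠ 0) : ℤ) = Fintype.card F - 1 := by
    rw [filter_ne', card_erase_of_mem (mem_univ _), card_univ, Nat.cast_sub Fintype.card_pos,
      Nat.cast_one]
  rw [← filter_filter]
  set S := univ.filter fun x : F => x ≠ 0
  have hψinv : ∑ x ∈ S, traceSign F x⁻¹ = -1 := by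
    rw [sum_filter_ne_zero_inv, sum_filter_ne_zero_traceSign]
  calc 4 * (#(S.filter fun z => Algebra.trace (ZMod 2) F z = 1 ∧
        Algebra.trace (ZMod 2) F z⁻¹ = 1) : ℤ)
      = ∑ x ∈ S, (1 - traceSign F x - traceSign F x⁻¹ + traceSign F (x + x⁻¹)) := by
        rw [natCast_card_filter, mul_sum]
        refine sum_congr rfl fun x _ => ?_
        simp only [traceSign_apply, map_add]
        exact four_mul_ite_and_eq_signAddChar _ _
    _ = _ := by
      rw [sum_add_distrib, sum_sub_distrib, sum_sub_distrib, sum_const, hψinv,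
        sum_filter_ne_zero_traceSign, nsmul_one, hS]
      ring

end TraceSign

/-- For `q = 2^m` and `D = {z ∈ F_q : z ≠ 0, Tr_m(z) = Tr_m(z⁻¹) = 1}`,
one has `4·|D| = k_m(1) + 2^m + 1`. -/
theorem card_Dset (m : ℕ) (hm : 1 ≤ m) :
    4 * ((Dset m).card : ℤ) = kloos m 1 + 2 ^ m + 1 := by
  have hcard : Fintype.card (GaloisField 2 m) = 2 ^ m := by
    rw [← Nat.card_eq_fintype_card, GaloisField.card 2 m (by omega)]
  have h := four_mul_card_trace_eq_one_trace_inv_eq_one (GaloisField 2 m)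
  simp only [kloos, one_mul]
  exact_mod_cast hcard ▸ h
end
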